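/- Let f : ℝ → ℝ be an even function with ∫_ℝ |f(x)| (x² ∨ 1) dx < ∞. Then for every σ > 0 and every h ∈ ℝ, | σ · E[f(h + σZ)] − (e^{−h²/(2σ²)}/√(2π)) · ∫_ℝ f(x) dx | ≤ (1/(2√(2π) σ²)) · ∫_ℝ x² |f(x)| dx. -/

import Mathlib

/-!
Write `σ E[f(h + σZ)] = ∫ f(x) φ((x - h)/σ) dx` with `φ` the standard Gaussian density. Since
`f` is even, this also equals `∫ f(x) φ((x + h)/σ) dx`, so twice the error is
`∫ f(x) (φ(t + x/σ) + φ(t - x/σ) - 2 φ(t)) dx` with `t = h/σ`. A second difference is bounded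
by `sup |φ''| · (x/σ)²`, and `φ''(z) = (z² - 1) φ(z)` is bounded by `1/√(2π)`.
-/

open MeasureTheory Filter

/-- Standard Gaussian density. -/
noncomputable def stdGauss (z : ℝ) : ℝ := Real.exp (-z ^ 2 / 2) / Real.sqrt (2 * Real.pi)

/-- Gaussian expectation `E[f(h + σ Z)]` for a standard Gaussian `Z`. -/
noncomputable def gexp (f : ℝ → ℝ) (σ h : ℝ) : ℝ := ∫ z, f (h + σ * z) * stdGauss z

open Real

theorem abs_sq_sub_one_mul_exp_le (z : ℝ) : |z ^ 2 - 1| * exp (-z ^ 2 / 2) ≤ 1 := by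
  have hexp : exp (-z ^ 2 / 2) ≤ 1 := exp_le_one_iff.2 (by nlinarith [sq_nonneg z])
  rcases le_total (z ^ 2) 1 with hz | hz
  · rw [abs_of_nonpos (by linarith)]
    nlinarith [exp_pos (-z ^ 2 / 2), sq_nonneg z]
  · -- `z² - 1 ≤ 1 + s + s²/2 ≤ exp s` for `s = z²/2`
    have hq := quadratic_le_exp_of_nonneg (by positivity : 0 ≤ z ^ 2 / 2)
    rw [abs_of_nonneg (by linarith), neg_div, exp_neg, ← div_eq_mul_inv,
      div_le_one (exp_pos _)]
    nlinarith [sq_nonneg (z ^ 2 / 2 - 1)]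

theorem stdGauss_neg (z : ℝ) : stdGauss (-z) = stdGauss z := by
  simp [stdGauss]

theorem stdGauss_nonneg (z : ℝ) : 0 ≤ stdGauss z := by
  unfold stdGauss; positivity

theorem stdGauss_le (z : ℝ) : stdGauss z ≤ 1 := by
  have hs : 1 ≤ √(2 * π) := one_le_sqrt.2 (by linarith [pi_gt_three])
  rw [stdGauss, div_le_one (by positivity)]
  exact (exp_le_one_iff.2 (by nlinarith [sq_nonneg z])).trans hs

theorem continuous_stdGauss : Continuous stdGauss := by
  unfold stdGauss; fun_prop

theorem hasDerivAt_stdGauss (z : ℝ) : HasDerivAt stdGauss (-z * stdGauss z) z := by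
  refine ((((hasDerivAt_pow 2 z).fun_neg.div_const 2).exp).div_const (√(2 * π))).congr_deriv ?_
  simp only [stdGauss]; push_cast; ring

theorem hasDerivAt_neg_mul_stdGauss (z : ℝ) :
    HasDerivAt (fun z => -z * stdGauss z) ((z ^ 2 - 1) * stdGauss z) z := by
  refine ((hasDerivAt_id' z).fun_neg.mul (hasDerivAt_stdGauss z)).congr_deriv ?_
  ring

theorem abs_sq_sub_one_mul_stdGauss_le (z : ℝ) :
    |(z ^ 2 - 1) * stdGauss z| ≤ 1 / √(2 * π) := by
  have hs : 0 < √(2 * π) := by positivity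
  rw [stdGauss, mul_div_assoc', abs_div, abs_mul, abs_of_pos (exp_pos _), abs_of_pos hs]
  exact div_le_div_of_nonneg_right (abs_sq_sub_one_mul_exp_le z) hs.le

theorem abs_add_add_sub_two_mul_le_of_abs_deriv2_le {g g' g'' : ℝ → ℝ} {K : ℝ}
    (hg : ∀ x, HasDerivAt g (g' x) x) (hg' : ∀ x, HasDerivAt g' (g'' x) x)
    (hg'' : ∀ x, |g'' x| ≤ K) (t y : ℝ) :
    |g (t + y) + g (t - y) - 2 * g t| ≤ K * y ^ 2 := by
  have hlip : ∀ a b, |g' a - g' b| ≤ K * |a - b| := fun a b =>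
    convex_univ.norm_image_sub_le_of_norm_hasDerivWithin_le
      (fun x _ => (hg' x).hasDerivWithinAt) (fun x _ => hg'' x) trivial trivial
  suffices key : ∀ y, 0 ≤ y → |g (t + y) + g (t - y) - 2 * g t| ≤ K * y ^ 2 by
    rcases le_total 0 y with hy | hy
    · exact key y hy
    · simpa [sub_eq_add_neg, add_comm (g (t + -y))] using key (-y) (neg_nonneg.2 hy)
  intro y hy
  have hφ : ∀ s, HasDerivAt (fun s => g (t + s) + g (t - s) - 2 * g t)
      (g' (t + s) - g' (t - s)) s := by
    intro s
    have h1 := (hg (t + s)).comp s ((hasDerivAt_id s).const_add t)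
    have h2 := (hg (t - s)).comp s ((hasDerivAt_id s).const_sub t)
    simpa [sub_eq_add_neg] using (h1.add h2).sub_const (2 * g t)
  have hB : ∀ s, HasDerivAt (fun s => K * s ^ 2) (2 * K * s) s := fun s => by
    simpa [mul_comm, mul_left_comm, mul_assoc] using (hasDerivAt_pow 2 s).const_mul K
  refine image_norm_le_of_norm_deriv_right_le_deriv_boundary (a := 0) (b := y)
    (fun s _ => (hφ s).continuousAt.continuousWithinAt) (fun s _ => (hφ s).hasDerivWithinAt)
    (by simp [← two_mul]) hB (fun s hs => ?_) ⟨hy, le_rfl⟩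
  calc ‖g' (t + s) - g' (t - s)‖ ≤ K * |t + s - (t - s)| := hlip _ _
    _ = 2 * K * s := by
      rw [show t + s - (t - s) = 2 * s by ring, abs_of_nonneg (by linarith [hs.1])]; ring

theorem abs_stdGauss_add_add_sub_le (t y : ℝ) :
    |stdGauss (t + y) + stdGauss (t - y) - 2 * stdGauss t| ≤ 1 / √(2 * π) * y ^ 2 :=
  abs_add_add_sub_two_mul_le_of_abs_deriv2_le hasDerivAt_stdGauss hasDerivAt_neg_mul_stdGauss
    abs_sq_sub_one_mul_stdGauss_le t y

theorem MeasureTheory.Integrable.mul_stdGauss_comp {f g : ℝ → ℝ} (hf : Integrable f)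
    (hg : Measurable g) :
    Integrable (fun x => f x * stdGauss (g x)) :=
  hf.mul_bdd (continuous_stdGauss.measurable.comp hg).aestronglyMeasurable
    (c := 1) (.of_forall fun x => by
      rw [norm_of_nonneg (stdGauss_nonneg _)]; exact stdGauss_le _)

section WeightedIntegrable

variable {f : ℝ → ℝ} (hint : Integrable (fun x => f x * (x ^ 2 ⊔ 1)))
include hint

theorem integrable_of_integrable_mul_sq_sup_one : Integrable f := by
  have hw : ∀ x : ℝ, 0 < x ^ 2 ⊔ 1 := fun x => by positivity
  refine (hint.mul_bdd (g := fun x => (x ^ 2 ⊔ 1)⁻¹) (c := 1) ?_ (.of_forall fun x => ?_)).congr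
    (.of_forall fun x => by simp [(hw x).ne'])
  · exact (((continuous_pow 2).sup continuous_const).inv₀ fun x => (hw x).ne').aestronglyMeasurable
  · rw [norm_inv, norm_of_nonneg (hw x).le]
    exact inv_le_one_of_one_le₀ le_sup_right

theorem integrable_sq_mul_abs_of_integrable_mul_sq_sup_one :
    Integrable (fun x => x ^ 2 * |f x|) := by
  refine hint.norm.mono' ((continuous_pow 2).aestronglyMeasurable.mul
    (integrable_of_integrable_mul_sq_sup_one hint).aestronglyMeasurable.norm)
    (.of_forall fun x => ?_)
  rw [Real.norm_eq_abs, Real.norm_eq_abs, abs_mul, abs_mul, abs_abs, abs_of_nonneg (sq_nonneg x),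
    abs_of_pos (by positivity : (0 : ℝ) < x ^ 2 ⊔ 1), mul_comm]
  exact mul_le_mul_of_nonneg_left (le_sup_left : x ^ 2 ≤ x ^ 2 ⊔ 1) (abs_nonneg _)

end WeightedIntegrable

theorem mul_gexp_eq_integral (f : ℝ → ℝ) {σ : ℝ} (hσ : 0 < σ) (h : ℝ) :
    σ * gexp f σ h = ∫ x, f x * stdGauss ((x - h) / σ) := by
  have hsub := integral_add_left_eq_self (μ := volume) (fun x => f x * stdGauss ((x - h) / σ)) h
  have hscale := Measure.integral_comp_mul_left (fun y => f (h + y) * stdGauss ((h + y - h) / σ)) σ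
  simp only [add_sub_cancel_left, mul_div_cancel_left₀ _ hσ.ne'] at hscale hsub
  rw [gexp, hscale, ← hsub, smul_eq_mul, abs_inv, abs_of_pos hσ, mul_inv_cancel_left₀ hσ.ne']

theorem integral_mul_stdGauss_sub_div_eq {f : ℝ → ℝ} (heven : ∀ x, f (-x) = f x) (σ h : ℝ) :
    ∫ x, f x * stdGauss ((x - h) / σ) = ∫ x, f x * stdGauss ((x + h) / σ) := by
  rw [← integral_neg_eq_self]
  congr 1 with x
  rw [heven, ← stdGauss_neg]
  ring_nf

theorem stdGauss_div (h σ : ℝ) :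
    exp (-h ^ 2 / (2 * σ ^ 2)) / √(2 * π) = stdGauss (h / σ) := by
  rw [stdGauss, div_pow]
  ring_nf

theorem integral_mul_stdGauss_second_diff_eq {f : ℝ → ℝ} (heven : ∀ x, f (-x) = f x)
    (hf : Integrable f) {σ : ℝ} (hσ : 0 < σ) (h : ℝ) :
    ∫ x, f x * (stdGauss (h / σ + x / σ) + stdGauss (h / σ - x / σ) - 2 * stdGauss (h / σ))
      = 2 * (σ * gexp f σ h - stdGauss (h / σ) * ∫ x, f x) := by
  have hm := hf.mul_stdGauss_comp (g := fun x => (x - h) / σ) (by fun_prop)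
  have hp := hf.mul_stdGauss_comp (g := fun x => (x + h) / σ) (by fun_prop)
  have hpt : ∀ x, f x * (stdGauss (h / σ + x / σ) + stdGauss (h / σ - x / σ)
      - 2 * stdGauss (h / σ)) = f x * stdGauss ((x + h) / σ) + f x * stdGauss ((x - h) / σ)
        - 2 * stdGauss (h / σ) * f x := fun x => by
    rw [← stdGauss_neg (h / σ - x / σ)]
    ring_nf
  simp_rw [hpt]
  rw [integral_sub (hp.fun_add hm) (hf.const_mul _), integral_add hp hm, integral_const_mul,
    ← integral_mul_stdGauss_sub_div_eq heven, ← mul_gexp_eq_integral f hσ h]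
  ring

theorem abs_integral_mul_stdGauss_second_diff_le {f : ℝ → ℝ}
    (hf : Integrable (fun x => x ^ 2 * |f x|)) (σ h : ℝ) :
    |∫ x, f x * (stdGauss (h / σ + x / σ) + stdGauss (h / σ - x / σ) - 2 * stdGauss (h / σ))|
      ≤ 1 / (√(2 * π) * σ ^ 2) * ∫ x, x ^ 2 * |f x| := by
  rw [← integral_const_mul, ← Real.norm_eq_abs]
  refine norm_integral_le_of_norm_le (hf.const_mul _) (.of_forall fun x => ?_)
  rw [Real.norm_eq_abs, abs_mul]
  calc |f x| * |stdGauss (h / σ + x / σ) + stdGauss (h / σ - x / σ) - 2 * stdGauss (h / σ)|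
      ≤ |f x| * (1 / √(2 * π) * (x / σ) ^ 2) :=
        mul_le_mul_of_nonneg_left (abs_stdGauss_add_add_sub_le _ _) (abs_nonneg _)
    _ = 1 / (√(2 * π) * σ ^ 2) * (x ^ 2 * |f x|) := by
      rw [div_pow]
      ring

theorem stmt_1 (f : ℝ → ℝ) (heven : ∀ x, f (-x) = f x)
    (hint : Integrable (fun x => f x * (x ^ 2 ⊔ 1)))
    (σ : ℝ) (hσ : 0 < σ) (h : ℝ) :
    |σ * gexp f σ h - Real.exp (-h ^ 2 / (2 * σ ^ 2)) / Real.sqrt (2 * Real.pi) * ∫ x, f x|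
      ≤ 1 / (2 * Real.sqrt (2 * Real.pi) * σ ^ 2) * ∫ x, x ^ 2 * |f x| := by
  have hbound := abs_integral_mul_stdGauss_second_diff_le
    (integrable_sq_mul_abs_of_integrable_mul_sq_sup_one hint) σ h
  rw [integral_mul_stdGauss_second_diff_eq heven
    (integrable_of_integrable_mul_sq_sup_one hint) hσ h, abs_mul, abs_two] at hbound
  rw [stdGauss_div, show 1 / (2 * √(2 * π) * σ ^ 2) = 1 / (√(2 * π) * σ ^ 2) / 2 by ring]
  linarith
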